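/- For all integers t ≥ 2 and 1 ≤ r ≤ t − 1, the graph G_{t,r} satisfies γ×2(G_{t,r}) = α(G_{t,r}) + γ(G_{t,r}); that is, the bound γ×2(G) ≤ α(G) + γ(G) is attained with equality by every graph in the family {G_{t,r}}. -/
import Mathlib


/-! Basic domination-type definitions for finite simple graphs. -/

variable {V : Type*}

/-- The closed neighbourhood `N[v] = N(v) ∪ {v}`. -/
def closedNbhd (G : SimpleGraph V) (v : V) : Set V := insert v (G.neighborSet v)

/-- `D` is a dominating set: every vertex outside `D` has a neighbour in `D`. -/
def IsDomSet (G : SimpleGraph V) (D : Set V) : Prop := ∀ v ∉ D, ∃ u ∈ D, G.Adj u v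

/-- `D` is a double dominating set: `|N[v] ∩ D| ≥ 2` for every vertex `v`. -/
def IsDoubleDomSet (G : SimpleGraph V) (D : Set V) : Prop :=
  ∀ v : V, 2 ≤ (closedNbhd G v ∩ D).ncard

/-- `D` is a 2-dominating set: every vertex outside `D` has ≥ 2 neighbours in `D`. -/
def IsTwoDomSet (G : SimpleGraph V) (D : Set V) : Prop :=
  ∀ v ∉ D, 2 ≤ (G.neighborSet v ∩ D).ncard

/-- `D` is a total dominating set: every vertex has a neighbour in `D`. -/
def IsTotalDomSet (G : SimpleGraph V) (D : Set V) : Prop := ∀ v : V, ∃ u ∈ D, G.Adj u v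

/-- `S` is an independent set: no two vertices of `S` are adjacent. -/
def IsIndepSet' (G : SimpleGraph V) (S : Set V) : Prop := ∀ u ∈ S, ∀ v ∈ S, ¬ G.Adj u v

/-- `C` is a vertex cover: every edge has an endpoint in `C`. -/
def IsVertexCover (G : SimpleGraph V) (C : Set V) : Prop := ∀ u v, G.Adj u v → u ∈ C ∨ v ∈ C

/-- The domination number `γ(G)`. -/
noncomputable def domNum (G : SimpleGraph V) : ℕ :=
  sInf {k | ∃ D : Set V, IsDomSet G D ∧ D.ncard = k}

/-- The double domination number `γ×2(G)`. -/
noncomputable def ddomNum (G : SimpleGraph V) : ℕ :=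
  sInf {k | ∃ D : Set V, IsDoubleDomSet G D ∧ D.ncard = k}

/-- The 2-domination number `γ₂(G)`. -/
noncomputable def twoDomNum (G : SimpleGraph V) : ℕ :=
  sInf {k | ∃ D : Set V, IsTwoDomSet G D ∧ D.ncard = k}

/-- The total domination number `γt(G)`. -/
noncomputable def totalDomNum (G : SimpleGraph V) : ℕ :=
  sInf {k | ∃ D : Set V, IsTotalDomSet G D ∧ D.ncard = k}

/-- The vertex cover number `β(G)`. -/
noncomputable def vcNum (G : SimpleGraph V) : ℕ :=
  sInf {k | ∃ C : Set V, IsVertexCover G C ∧ C.ncard = k}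

/-- The independence number `α(G)`. -/
noncomputable def indepNum (G : SimpleGraph V) : ℕ :=
  sSup {k | ∃ S : Set V, IsIndepSet' G S ∧ S.ncard = k}

/-- The independent domination number `i(G)`. -/
noncomputable def indepDomNum (G : SimpleGraph V) : ℕ :=
  sInf {k | ∃ S : Set V, IsIndepSet' G S ∧ IsDomSet G S ∧ S.ncard = k}

/-- The set of leaves (vertices of degree one). -/
def leafSet (G : SimpleGraph V) : Set V := {v | (G.neighborSet v).ncard = 1}

/-- The set of support vertices (vertices adjacent to a leaf). -/
def supportSet (G : SimpleGraph V) : Set V := {v | ∃ u, G.Adj v u ∧ u ∈ leafSet G}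

/-- The graph `G_{t,r}`: two stars `K_{1,t}` with support vertices `u = (false, none)`,
`u' = (true, none)` and leaves `vᵢ = (false, some i)`, `vᵢ' = (true, some i)`,
together with the edge `uu'` and the edges `vᵢvᵢ'` for the first `r` indices. -/
def Gtr (t r : ℕ) : SimpleGraph (Bool × Option (Fin t)) :=
  SimpleGraph.fromRel (fun x y =>
    (x.1 = y.1 ∧ x.2 = none ∧ y.2 ≠ none) ∨
    (x.2 = none ∧ y.2 = none) ∨
    (x.1 ≠ y.1 ∧ ∃ i : Fin t, x.2 = some i ∧ y.2 = some i ∧ i.val < r))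

namespace Stmt10Aux

variable {t r : ℕ}

lemma adj_star (b : Bool) (i : Fin t) : (Gtr t r).Adj (b, none) (b, some i) := by
  rw [Gtr, SimpleGraph.fromRel_adj]
  exact ⟨by simp, Or.inl (Or.inl ⟨rfl, rfl, by simp⟩)⟩

lemma adj_supp : (Gtr t r).Adj ((false : Bool), (none : Option (Fin t))) (true, none) := by
  rw [Gtr, SimpleGraph.fromRel_adj]
  exact ⟨by simp, Or.inl (Or.inr (Or.inl ⟨rfl, rfl⟩))⟩

lemma adj_cross (b : Bool) (i : Fin t) (hi : i.val < r) :
    (Gtr t r).Adj (b, some i) (!b, some i) := by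
  rw [Gtr, SimpleGraph.fromRel_adj]
  exact ⟨by simp, Or.inl (Or.inr (Or.inr ⟨by simp, i, rfl, rfl, hi⟩))⟩

lemma nbhd_high (b : Bool) (i : Fin t) (hi : r ≤ i.val) :
    (Gtr t r).neighborSet (b, some i) = {(b, none)} := by
  ext ⟨c, o⟩
  simp only [SimpleGraph.mem_neighborSet, Gtr, SimpleGraph.fromRel_adj, Set.mem_singleton_iff,
    Prod.mk.injEq, Prod.ext_iff, ne_eq]
  cases o <;> cases b <;> cases c <;> simp_all <;> omega

lemma nbhd_low (b : Bool) (i : Fin t) (hi : i.val < r) :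
    (Gtr t r).neighborSet (b, some i) = {(b, none), (!b, some i)} := by
  ext ⟨c, o⟩
  simp only [SimpleGraph.mem_neighborSet, Gtr, SimpleGraph.fromRel_adj, Set.mem_insert_iff,
    Set.mem_singleton_iff, Prod.mk.injEq, Prod.ext_iff, ne_eq]
  cases o <;> cases b <;> cases c <;> simp_all <;> omega

lemma not_adj_same (b : Bool) (i j : Fin t) : ¬ (Gtr t r).Adj (b, some i) (b, some j) := by
  rw [Gtr, SimpleGraph.fromRel_adj]
  rintro ⟨hne, h⟩
  simp at h

lemma adj_cross_iff (b : Bool) (i j : Fin t) :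
    (Gtr t r).Adj (b, some i) (!b, some j) ↔ i = j ∧ j.val < r := by
  rw [Gtr, SimpleGraph.fromRel_adj]
  constructor
  · rintro ⟨hne, h⟩
    simp only [ne_eq, reduceCtorEq, false_and, and_false, false_or, Option.some.injEq] at h
    rcases h with ⟨-, k, rfl, rfl, hk⟩ | ⟨-, k, rfl, rfl, hk⟩
    · exact ⟨rfl, hk⟩
    · exact ⟨rfl, hk⟩
  · rintro ⟨rfl, hj⟩
    exact ⟨by simp, Or.inl (Or.inr (Or.inr ⟨by simp, i, rfl, rfl, hj⟩))⟩

end Stmt10Aux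
namespace Stmt10Aux2
open Stmt10Aux

variable {α : Type*}

lemma two_le_ncard {a b : α} {s : Set α} (hs : s.Finite) (ha : a ∈ s) (hb : b ∈ s)
    (hab : a ≠ b) : 2 ≤ s.ncard :=
  (Set.one_lt_ncard hs).mpr ⟨a, ha, b, hb, hab⟩

lemma pair_forced {a b : α} {s : Set α} (hs : s.Finite) (hsub : s ⊆ {a, b})
    (h2 : 2 ≤ s.ncard) : a ∈ s ∧ b ∈ s := by
  obtain ⟨x, hx, y, hy, hxy⟩ := (Set.one_lt_ncard hs).mp h2
  rcases hsub hx with rfl | rfl <;> rcases hsub hy with rfl | rfl <;>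
    first | exact absurd rfl hxy | exact ⟨hx, hy⟩ | exact ⟨hy, hx⟩

lemma triple_forced {a b c : α} {s : Set α} (hs : s.Finite) (hsub : s ⊆ {a, b, c})
    (h2 : 2 ≤ s.ncard) : b ∈ s ∨ c ∈ s := by
  obtain ⟨x, hx, y, hy, hxy⟩ := (Set.one_lt_ncard hs).mp h2
  rcases hsub hx with rfl | rfl | rfl
  · rcases hsub hy with rfl | rfl | rfl
    · exact absurd rfl hxy
    · exact Or.inl hy
    · exact Or.inr hy
  · exact Or.inl hx
  · exact Or.inr hx

variable {t r : ℕ}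

/-- The big independent set. -/
def T (t r : ℕ) : Set (Bool × Option (Fin t)) :=
  (fun i : Fin t => ((false : Bool), (some i : Option (Fin t)))) '' Set.univ ∪
    (fun i : Fin t => ((true : Bool), (some i : Option (Fin t)))) '' {i : Fin t | r ≤ i.val}

lemma ncard_ici (hrt : r < t) : {i : Fin t | r ≤ i.val}.ncard = t - r := by
  have : {i : Fin t | r ≤ i.val} = ↑(Finset.Ici (⟨r, hrt⟩ : Fin t)) := by
    ext i; simp [Fin.le_def]
  rw [this, Set.ncard_coe_finset, Fin.card_Ici]

lemma ncard_T (hrt : r < t) : (T t r).ncard = 2 * t - r := by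
  have hd : Disjoint ((fun i : Fin t => ((false : Bool), (some i : Option (Fin t)))) '' Set.univ)
      ((fun i : Fin t => ((true : Bool), (some i : Option (Fin t)))) '' {i : Fin t | r ≤ i.val}) := by
    rw [Set.disjoint_left]
    rintro x ⟨i, -, rfl⟩ ⟨j, -, h⟩
    simp at h
  rw [T, Set.ncard_union_eq hd (Set.toFinite _) (Set.toFinite _),
    Set.ncard_image_of_injective _ (by intro a b h; simpa using h),
    Set.ncard_image_of_injective _ (by intro a b h; simpa using h),
    Set.ncard_univ, Nat.card_eq_fintype_card, Fintype.card_fin, ncard_ici hrt]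
  omega

/-- The double dominating set. -/
def D0 (t r : ℕ) : Set (Bool × Option (Fin t)) :=
  insert ((false : Bool), (none : Option (Fin t))) (insert (true, none) (T t r))

lemma ncard_D0 (hrt : r < t) : (D0 t r).ncard = 2 * t - r + 2 := by
  have h1 : ((true : Bool), (none : Option (Fin t))) ∉ T t r := by
    rintro (⟨i, -, h⟩ | ⟨i, -, h⟩) <;> simp at h
  have h2 : ((false : Bool), (none : Option (Fin t))) ∉
      insert ((true : Bool), (none : Option (Fin t))) (T t r) := by
    rintro (h | ⟨i, -, h⟩ | ⟨i, -, h⟩) <;> simp_all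
  rw [D0, Set.ncard_insert_of_notMem h2 (Set.toFinite _),
    Set.ncard_insert_of_notMem h1 (Set.toFinite _), ncard_T hrt]

end Stmt10Aux2
namespace Stmt10Aux3
open Stmt10Aux Stmt10Aux2

variable {t r : ℕ}

/-- Folding map sending `(true, some i)` with `i < r` to `(false, some i)`. -/
def phi (r : ℕ) : Bool × Option (Fin t) → Bool × Option (Fin t) := fun x =>
  match x with
  | (true, some i) => if i.val < r then ((false : Bool), some i) else (true, some i)
  | x => x

lemma phi_ff (i : Fin t) : phi r ((false : Bool), some i) = (false, some i) := rfl

lemma phi_tt (i : Fin t) :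
    phi r ((true : Bool), some i) = if i.val < r then ((false : Bool), some i)
      else (true, some i) := rfl

lemma phi_none (b : Bool) : phi r (b, (none : Option (Fin t))) = (b, none) := by
  cases b <;> rfl

lemma domNum_eq (ht : 2 ≤ t) (hr2 : r ≤ t - 1) : domNum (Gtr t r) = 2 := by
  have hrt : r < t := by omega
  apply le_antisymm
  · apply Nat.sInf_le
    refine ⟨{((false : Bool), (none : Option (Fin t))), (true, none)}, ?_, ?_⟩
    · rintro ⟨b, o⟩ hv
      cases o with
      | none => cases b <;> simp at hv
      | some i => exact ⟨(b, none), by cases b <;> simp, adj_star b i⟩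
    · exact Set.ncard_pair (by simp)
  · refine le_csInf ⟨_, Set.univ, fun v hv => absurd (Set.mem_univ v) hv, rfl⟩ ?_
    rintro k ⟨D, hD, rfl⟩
    set j : Fin t := ⟨t - 1, by omega⟩ with hj
    have hjr : r ≤ j.val := by simp [hj]; omega
    have hget : ∀ b : Bool, ∃ x ∈ D, x = (b, some j) ∨ x = (b, none) := by
      intro b
      by_cases h : (b, some j) ∈ D
      · exact ⟨_, h, Or.inl rfl⟩
      · obtain ⟨w, hw, hadj⟩ := hD _ h
        have hw' : w ∈ (Gtr t r).neighborSet (b, some j) := hadj.symm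
        rw [nbhd_high b j hjr] at hw'
        exact ⟨w, hw, Or.inr hw'⟩
    obtain ⟨x, hx, hx'⟩ := hget false
    obtain ⟨y, hy, hy'⟩ := hget true
    exact two_le_ncard (Set.toFinite D) hx hy
      (by rcases hx' with rfl | rfl <;> rcases hy' with rfl | rfl <;> simp)

end Stmt10Aux3
namespace Stmt10Aux4
open Stmt10Aux Stmt10Aux2 Stmt10Aux3

variable {t r : ℕ}

lemma indep_bound (ht : 2 ≤ t) (hr2 : r ≤ t - 1) {S : Set (Bool × Option (Fin t))}
    (hS : IsIndepSet' (Gtr t r) S) : S.ncard ≤ 2 * t - r := by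
  have hrt : r < t := by omega
  by_cases hu : ((false : Bool), (none : Option (Fin t))) ∈ S
  · have hsub : S ⊆ insert ((false : Bool), (none : Option (Fin t)))
        ((fun i : Fin t => ((true : Bool), (some i : Option (Fin t)))) '' Set.univ) := by
      rintro ⟨b, o⟩ hx
      cases o with
      | none =>
        cases b
        · exact Set.mem_insert _ _
        · exact absurd adj_supp (hS _ hu _ hx)
      | some i =>
        cases b
        · exact absurd (adj_star false i) (hS _ hu _ hx)
        · exact Set.mem_insert_of_mem _ ⟨i, Set.mem_univ i, rfl⟩
    calc S.ncard ≤ _ := Set.ncard_le_ncard hsub (Set.toFinite _)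
      _ ≤ ((fun i : Fin t => ((true : Bool), (some i : Option (Fin t)))) ''
            Set.univ).ncard + 1 := Set.ncard_insert_le _ _
      _ ≤ 2 * t - r := by
          rw [Set.ncard_image_of_injective _ (by intro a b h; simpa using h),
            Set.ncard_univ, Nat.card_eq_fintype_card, Fintype.card_fin]
          omega
  · by_cases hu' : ((true : Bool), (none : Option (Fin t))) ∈ S
    · have hsub : S ⊆ insert ((true : Bool), (none : Option (Fin t)))
          ((fun i : Fin t => ((false : Bool), (some i : Option (Fin t)))) '' Set.univ) := by
        rintro ⟨b, o⟩ hx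
        cases o with
        | none =>
          cases b
          · exact absurd adj_supp.symm (hS _ hu' _ hx)
          · exact Set.mem_insert _ _
        | some i =>
          cases b
          · exact Set.mem_insert_of_mem _ ⟨i, Set.mem_univ i, rfl⟩
          · exact absurd (adj_star true i) (hS _ hu' _ hx)
      calc S.ncard ≤ _ := Set.ncard_le_ncard hsub (Set.toFinite _)
        _ ≤ ((fun i : Fin t => ((false : Bool), (some i : Option (Fin t)))) ''
              Set.univ).ncard + 1 := Set.ncard_insert_le _ _
        _ ≤ 2 * t - r := by
            rw [Set.ncard_image_of_injective _ (by intro a b h; simpa using h),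
              Set.ncard_univ, Nat.card_eq_fintype_card, Fintype.card_fin]
            omega
    · have hshape : ∀ x ∈ S, ∃ (b : Bool) (i : Fin t), x = (b, some i) := by
        rintro ⟨b, o⟩ hx
        cases o with
        | none =>
          cases b
          · exact absurd hx hu
          · exact absurd hx hu'
        | some i => exact ⟨b, i, rfl⟩
      have hinj : Set.InjOn (phi r) S := by
        intro x hx y hy h
        obtain ⟨b, i, rfl⟩ := hshape x hx
        obtain ⟨c, j, rfl⟩ := hshape y hy
        cases b <;> cases c
        · rw [phi_ff, phi_ff] at h; exact h
        · rw [phi_ff, phi_tt] at h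
          split_ifs at h with hj
          · simp only [Prod.mk.injEq, Option.some.injEq] at h
            obtain ⟨-, rfl⟩ := h
            exact absurd (adj_cross false i hj) (hS _ hx _ hy)
          · simp at h
        · rw [phi_tt, phi_ff] at h
          split_ifs at h with hi
          · simp only [Prod.mk.injEq, Option.some.injEq] at h
            obtain ⟨-, rfl⟩ := h
            exact absurd (adj_cross true i hi) (hS _ hx _ hy)
          · simp at h
        · rw [phi_tt, phi_tt] at h
          split_ifs at h with hi hj hj <;> simp_all
      have himg : phi r '' S ⊆ T t r := by
        rintro _ ⟨x, hx, rfl⟩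
        obtain ⟨b, i, rfl⟩ := hshape x hx
        cases b
        · exact Or.inl ⟨i, Set.mem_univ i, (phi_ff i).symm⟩
        · rw [phi_tt]
          split_ifs with hi
          · exact Or.inl ⟨i, Set.mem_univ i, rfl⟩
          · exact Or.inr ⟨i, by simpa using Nat.le_of_not_lt hi, rfl⟩
      calc S.ncard = (phi r '' S).ncard := (Set.ncard_image_of_injOn hinj).symm
        _ ≤ (T t r).ncard := Set.ncard_le_ncard himg (Set.toFinite _)
        _ = 2 * t - r := ncard_T hrt

lemma T_indep : IsIndepSet' (Gtr t r) (T t r) := by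
  rintro x (⟨i, -, rfl⟩ | ⟨i, hi, rfl⟩) y (⟨j, -, rfl⟩ | ⟨j, hj, rfl⟩) hadj
  · exact not_adj_same false i j hadj
  · obtain ⟨rfl, h⟩ := (adj_cross_iff false i j).mp hadj
    simp only [Set.mem_setOf_eq] at hj
    omega
  · obtain ⟨rfl, h⟩ := (adj_cross_iff true i j).mp hadj
    simp only [Set.mem_setOf_eq] at hi
    omega
  · exact not_adj_same true i j hadj

lemma indepNum_eq (ht : 2 ≤ t) (hr1 : 1 ≤ r) (hr2 : r ≤ t - 1) :
    indepNum (Gtr t r) = 2 * t - r := by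
  have hrt : r < t := by omega
  apply le_antisymm
  · refine csSup_le ⟨0, ∅, fun u hu => absurd hu (Set.notMem_empty u), by simp⟩ ?_
    rintro k ⟨S, hS, rfl⟩
    exact indep_bound ht hr2 hS
  · exact le_csSup ⟨2 * t - r, by rintro k ⟨S, hS, rfl⟩; exact indep_bound ht hr2 hS⟩
      ⟨T t r, T_indep, ncard_T hrt⟩

end Stmt10Aux4
namespace Stmt10Aux5
open Stmt10Aux Stmt10Aux2 Stmt10Aux3 Stmt10Aux4

variable {t r : ℕ}

lemma mem_D0_u : ((false : Bool), (none : Option (Fin t))) ∈ D0 t r := Set.mem_insert _ _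

lemma mem_D0_u' : ((true : Bool), (none : Option (Fin t))) ∈ D0 t r :=
  Set.mem_insert_of_mem _ (Set.mem_insert _ _)

lemma mem_D0_vf (i : Fin t) : ((false : Bool), (some i : Option (Fin t))) ∈ D0 t r :=
  Set.mem_insert_of_mem _ (Set.mem_insert_of_mem _ (Or.inl ⟨i, Set.mem_univ i, rfl⟩))

lemma mem_D0_vt (i : Fin t) (hi : r ≤ i.val) :
    ((true : Bool), (some i : Option (Fin t))) ∈ D0 t r :=
  Set.mem_insert_of_mem _ (Set.mem_insert_of_mem _ (Or.inr ⟨i, hi, rfl⟩))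

lemma mem_closed_self {V : Type*} (G : SimpleGraph V) (v : V) : v ∈ closedNbhd G v :=
  Set.mem_insert _ _

lemma mem_closed_adj {V : Type*} {G : SimpleGraph V} {v w : V} (h : G.Adj v w) :
    w ∈ closedNbhd G v := Set.mem_insert_of_mem _ h

lemma D0_ddom : IsDoubleDomSet (Gtr t r) (D0 t r) := by
  rintro ⟨b, o⟩
  cases o with
  | none =>
    cases b
    · exact two_le_ncard (Set.toFinite _)
        ⟨mem_closed_self _ _, mem_D0_u⟩ ⟨mem_closed_adj adj_supp, mem_D0_u'⟩ (by simp)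
    · exact two_le_ncard (Set.toFinite _)
        ⟨mem_closed_self _ _, mem_D0_u'⟩ ⟨mem_closed_adj adj_supp.symm, mem_D0_u⟩ (by simp)
  | some i =>
    cases b
    · exact two_le_ncard (Set.toFinite _)
        ⟨mem_closed_self _ _, mem_D0_vf i⟩
        ⟨mem_closed_adj (adj_star false i).symm, mem_D0_u⟩ (by simp)
    · by_cases hi : r ≤ i.val
      · exact two_le_ncard (Set.toFinite _)
          ⟨mem_closed_self _ _, mem_D0_vt i hi⟩
          ⟨mem_closed_adj (adj_star true i).symm, mem_D0_u'⟩ (by simp)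
      · exact two_le_ncard (Set.toFinite _)
          ⟨mem_closed_adj (adj_star true i).symm, mem_D0_u'⟩
          ⟨mem_closed_adj (adj_cross true i (by omega)), mem_D0_vf i⟩ (by simp)

lemma ddom_lower (ht : 2 ≤ t) (hr2 : r ≤ t - 1) {D : Set (Bool × Option (Fin t))}
    (hD : IsDoubleDomSet (Gtr t r) D) : 2 * t - r + 2 ≤ D.ncard := by
  have hrt : r < t := by omega
  have h_pair : ∀ (b : Bool) (i : Fin t), r ≤ i.val → (b, some i) ∈ D ∧ (b, none) ∈ D := by
    intro b i hi
    have h2 := hD (b, some i)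
    have hsub : closedNbhd (Gtr t r) (b, some i) ∩ D ⊆ {(b, some i), (b, none)} := by
      rw [closedNbhd, nbhd_high b i hi]
      exact fun x hx => hx.1
    have h := pair_forced (Set.toFinite _) hsub h2
    exact ⟨h.1.2, h.2.2⟩
  have h_low : ∀ i : Fin t, i.val < r → (false, some i) ∈ D ∨ (true, some i) ∈ D := by
    intro i hi
    have h2 := hD (false, some i)
    have hsub : closedNbhd (Gtr t r) (false, some i) ∩ D ⊆
        {((false : Bool), (none : Option (Fin t))), (false, some i), (true, some i)} := by
      intro x hx
      have hx1 := hx.1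
      rw [closedNbhd, nbhd_low false i hi] at hx1
      rcases hx1 with rfl | rfl | h
      · exact Or.inr (Or.inl rfl)
      · exact Or.inl rfl
      · exact Or.inr (Or.inr h)
    rcases triple_forced (Set.toFinite _) hsub h2 with h | h
    · exact Or.inl h.2
    · exact Or.inr h.2
  set j : Fin t := ⟨t - 1, by omega⟩ with hj
  have hjr : r ≤ j.val := by simp [hj]; omega
  have hu : ((false : Bool), (none : Option (Fin t))) ∈ D := (h_pair false j hjr).2
  have hu' : ((true : Bool), (none : Option (Fin t))) ∈ D := (h_pair true j hjr).2
  have hsub : D0 t r ⊆ phi r '' D := by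
    rintro x (rfl | rfl | ⟨i, -, rfl⟩ | ⟨i, hi, rfl⟩)
    · exact ⟨_, hu, phi_none false⟩
    · exact ⟨_, hu', phi_none true⟩
    · by_cases hi : r ≤ i.val
      · exact ⟨_, (h_pair false i hi).1, phi_ff i⟩
      · rcases h_low i (by omega) with h | h
        · exact ⟨_, h, phi_ff i⟩
        · exact ⟨_, h, by rw [phi_tt, if_pos (by omega)]⟩
    · simp only [Set.mem_setOf_eq] at hi
      exact ⟨_, (h_pair true i hi).1, by rw [phi_tt, if_neg (by omega)]⟩
  calc 2 * t - r + 2 = (D0 t r).ncard := (ncard_D0 hrt).symm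
    _ ≤ (phi r '' D).ncard := Set.ncard_le_ncard hsub (Set.toFinite _)
    _ ≤ D.ncard := Set.ncard_image_le (Set.toFinite _)

lemma ddomNum_eq (ht : 2 ≤ t) (hr2 : r ≤ t - 1) : ddomNum (Gtr t r) = 2 * t - r + 2 := by
  have hrt : r < t := by omega
  apply le_antisymm
  · exact Nat.sInf_le ⟨D0 t r, D0_ddom, ncard_D0 hrt⟩
  · refine le_csInf ⟨_, D0 t r, D0_ddom, rfl⟩ ?_
    rintro k ⟨D, hD, rfl⟩
    exact ddom_lower ht hr2 hD

end Stmt10Aux5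

/-- `γ×2(G_{t,r}) = α(G_{t,r}) + γ(G_{t,r})`: the bound `γ×2(G) ≤ α(G) + γ(G)` is
attained with equality by every graph of the family `{G_{t,r}}`. -/
theorem stmt10 (t r : ℕ) (ht : 2 ≤ t) (hr1 : 1 ≤ r) (hr2 : r ≤ t - 1) :
    ddomNum (Gtr t r) = indepNum (Gtr t r) + domNum (Gtr t r) := by
  rw [Stmt10Aux5.ddomNum_eq ht hr2, Stmt10Aux4.indepNum_eq ht hr1 hr2,
    Stmt10Aux3.domNum_eq ht hr2]
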